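/- Suppose G* ⊆ Q⁰_λ is ≤⁰-directed and ≤⁰-downward closed, p ∈ G*, X ⊆ C^p has cardinality λ, C ⊆ C^p is a club of λ such that p is restrictable to ⟨X, C⟩, and ⋃_{x∈X} Z^p_x ∈ fil(G*). Then p↾⟨X,C⟩ ∈ G*. -/

import Mathlib

open Set

noncomputable section

def IsUltrafilterOn {α : Type*} (Z : Set α) (d : Set (Set α)) : Prop :=
  (∀ A ∈ d, A ⊆ Z) ∧ Z ∈ d ∧ ∅ ∉ d ∧
  (∀ A B : Set α, A ∈ d → A ⊆ B → B ⊆ Z → B ∈ d) ∧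
  (∀ A B : Set α, A ∈ d → B ∈ d → A ∩ B ∈ d) ∧
  (∀ A : Set α, A ⊆ Z → (A ∈ d ∨ Z \ A ∈ d))

def IsNonprincipalOn {α : Type*} (Z : Set α) (d : Set (Set α)) : Prop :=
  IsUltrafilterOn Z d ∧ ∀ x : α, {x} ∉ d

def IsClubIn (C : Set Ordinal) (lam : Ordinal) : Prop :=
  C ⊆ Iio lam ∧ (∀ β < lam, ∃ δ ∈ C, β < δ) ∧
  (∀ β < lam, β ≠ 0 → sSup (C ∩ Iio β) = β → β ∈ C)

def nextIn (C : Set Ordinal) (δ : Ordinal) : Ordinal := sInf (C \ Iic δ)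

/-- An element of `Q⁰_λ`: a club `C` of limit ordinals below `λ`, together with
a non-principal ultrafilter `d δ` on the interval `Z_δ = [δ, min(C ∖ (δ+1)))` for each `δ ∈ C`. -/
structure QZero (lam : Ordinal) where
  C : Set Ordinal
  d : Ordinal → Set (Set Ordinal)
  club : IsClubIn C lam
  limit : ∀ δ ∈ C, Order.IsSuccLimit δ
  ultra : ∀ δ ∈ C, IsNonprincipalOn (Ico δ (nextIn C δ)) (d δ)

def QZero.Z {lam : Ordinal} (p : QZero lam) (δ : Ordinal) : Set Ordinal :=
  Ico δ (nextIn p.C δ)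

def fil {lam : Ordinal} (p : QZero lam) : Set (Set Ordinal) :=
  {A | A ⊆ Iio lam ∧ ∃ ε < lam, ∀ δ ∈ p.C, ε ≤ δ → A ∩ p.Z δ ∈ p.d δ}

def le0 {lam : Ordinal} (p q : QZero lam) : Prop := fil p ⊆ fil q

def filG {lam : Ordinal} (G : Set (QZero lam)) : Set (Set Ordinal) :=
  ⋃ p ∈ G, fil p

/-- `p` is restrictable to `⟨X, C⟩`. -/
def Restrictable (κ : Cardinal.{0}) (p : QZero κ.ord) (X C : Set Ordinal) : Prop :=
  X ⊆ p.C ∧ Cardinal.mk ↥X = Cardinal.lift.{1,0} κ ∧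
  IsClubIn C κ.ord ∧ C ⊆ p.C ∧
  ∀ α ∈ C, ∃! x, x ∈ X ∩ Ico α (nextIn C α)

/-!
Let `s ∈ G*` lie `≤⁰`-above both `p` and a condition whose filter contains `U = ⋃_{x∈X} Z^p_x`.
If `A ∈ fil(p↾⟨X,C⟩)`, then `A ∪ (λ ∖ U) ∈ fil(p)`: on a block `Z^p_x` with `x ∈ X` the
restricted ultrafilter is `d^p_x`, and every other block misses `U`. Hence
`A ⊇ (A ∪ (λ ∖ U)) ∩ U ∈ fil(s)`, so `p↾⟨X,C⟩ ≤⁰ s` and downward closure gives the claim.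
-/

lemma nextIn_le {C : Set Ordinal} {δ x : Ordinal} (hx : x ∈ C) (hδx : δ < x) :
    nextIn C δ ≤ x :=
  csInf_le (OrderBot.bddBelow _) ⟨hx, not_le.2 hδx⟩

lemma disjoint_Ico_nextIn {C : Set Ordinal} {δ x : Ordinal} (hδ : δ ∈ C) (hx : x ∈ C)
    (hne : δ ≠ x) : Disjoint (Ico δ (nextIn C δ)) (Ico x (nextIn C x)) := by
  rcases lt_or_gt_of_ne hne with hlt | hlt
  · exact Ico_disjoint_Ico_same.mono_left (Ico_subset_Ico_right (nextIn_le hx hlt))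
  · exact Ico_disjoint_Ico_same.symm.mono_right (Ico_subset_Ico_right (nextIn_le hδ hlt))

namespace IsClubIn

variable {C : Set Ordinal} {lam : Ordinal}

lemma nextIn_mem (hC : IsClubIn C lam) {δ : Ordinal} (hδ : δ < lam) :
    nextIn C δ ∈ C \ Iic δ := by
  obtain ⟨γ, hγC, hδγ⟩ := hC.2.1 δ hδ
  exact csInf_mem ⟨γ, hγC, not_le.2 hδγ⟩

lemma lt_nextIn (hC : IsClubIn C lam) {δ : Ordinal} (hδ : δ < lam) : δ < nextIn C δ :=
  not_le.1 (hC.nextIn_mem hδ).2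

lemma nextIn_lt (hC : IsClubIn C lam) {δ : Ordinal} (hδ : δ < lam) : nextIn C δ < lam :=
  hC.1 (hC.nextIn_mem hδ).1

lemma sSup_inter_Iic_mem (hC : IsClubIn C lam) {γ x : Ordinal} (hγ : γ ∈ C) (hγx : γ ≤ x)
    (hx : x < lam) : sSup (C ∩ Iic x) ∈ C := by
  have hbdd : BddAbove (C ∩ Iic x) := ⟨x, fun _ hy => hy.2⟩
  have hβx : sSup (C ∩ Iic x) ≤ x := csSup_le ⟨γ, hγ, hγx⟩ fun _ hy => hy.2
  have hγβ : γ ≤ sSup (C ∩ Iic x) := le_csSup hbdd ⟨hγ, hγx⟩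
  by_contra hβC
  refine hβC (hC.2.2 _ (hβx.trans_lt hx) ?_ ?_)
  · rintro hβ0
    exact hβC (by rwa [hβ0, ← nonpos_iff_eq_zero.1 (hβ0 ▸ hγβ)])
  · congr 1
    ext y
    refine ⟨fun hy => ⟨hy.1, hy.2.le.trans hβx⟩, fun hy => ⟨hy.1, ?_⟩⟩
    exact (le_csSup hbdd hy).lt_of_ne fun hyβ => hβC (hyβ ▸ hy.1)

lemma exists_le_lt_nextIn (hC : IsClubIn C lam) {γ x : Ordinal} (hγ : γ ∈ C) (hγx : γ ≤ x)
    (hx : x < lam) : ∃ α ∈ C, γ ≤ α ∧ α ≤ x ∧ x < nextIn C α := by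
  have hbdd : BddAbove (C ∩ Iic x) := ⟨x, fun _ hy => hy.2⟩
  have hβC := hC.sSup_inter_Iic_mem hγ hγx hx
  have hβx : sSup (C ∩ Iic x) ≤ x := csSup_le ⟨γ, hγ, hγx⟩ fun _ hy => hy.2
  refine ⟨_, hβC, le_csSup hbdd ⟨hγ, hγx⟩, hβx, not_le.1 fun hle => ?_⟩
  have hnext := hC.nextIn_mem (hβx.trans_lt hx)
  exact hnext.2 (le_csSup hbdd ⟨hnext.1, hle⟩)

end IsClubIn

namespace IsUltrafilterOn

variable {α : Type*} {Z : Set α} {d : Set (Set α)}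

lemma self_mem (hd : IsUltrafilterOn Z d) : Z ∈ d := hd.2.1

lemma mem_of_superset (hd : IsUltrafilterOn Z d) {A B : Set α} (hA : A ∈ d) (hAB : A ⊆ B)
    (hBZ : B ⊆ Z) : B ∈ d :=
  hd.2.2.2.1 A B hA hAB hBZ

lemma inter_mem (hd : IsUltrafilterOn Z d) {A B : Set α} (hA : A ∈ d) (hB : B ∈ d) :
    A ∩ B ∈ d :=
  hd.2.2.2.2.1 A B hA hB

end IsUltrafilterOn

namespace QZero

variable {lam : Ordinal}

lemma isUltrafilterOn (p : QZero lam) {δ : Ordinal} (hδ : δ ∈ p.C) :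
    IsUltrafilterOn (p.Z δ) (p.d δ) :=
  (p.ultra δ hδ).1

lemma Z_subset_Iio (p : QZero lam) {δ : Ordinal} (hδ : δ ∈ p.C) : p.Z δ ⊆ Iio lam :=
  fun _ hy => hy.2.trans (p.club.nextIn_lt (p.club.1 hδ))

lemma Z_subset_Ico_nextIn (p : QZero lam) {C : Set Ordinal} (hC : IsClubIn C lam)
    (hCp : C ⊆ p.C) {α x : Ordinal} (hα : α ∈ C) (hx : x ∈ Ico α (nextIn C α)) :
    p.Z x ⊆ Ico α (nextIn C α) :=
  fun _ hy => ⟨hx.1.trans hy.1,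
    hy.2.trans_le (nextIn_le (hCp (hC.nextIn_mem (hC.1 hα)).1) hx.2)⟩

lemma inter_mem_fil (s : QZero lam) {A B : Set Ordinal} (hA : A ∈ fil s) (hB : B ∈ fil s) :
    A ∩ B ∈ fil s := by
  obtain ⟨hAlam, ε₁, hε₁, hA⟩ := hA
  obtain ⟨-, ε₂, hε₂, hB⟩ := hB
  refine ⟨inter_subset_left.trans hAlam, max ε₁ ε₂, max_lt hε₁ hε₂, fun δ hδ hεδ => ?_⟩
  rw [inter_inter_distrib_right]
  exact (s.isUltrafilterOn hδ).inter_mem (hA δ hδ (le_of_max_le_left hεδ))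
    (hB δ hδ (le_of_max_le_right hεδ))

lemma mem_fil_of_superset (s : QZero lam) {A B : Set Ordinal} (hA : A ∈ fil s) (hAB : A ⊆ B)
    (hB : B ⊆ Iio lam) : B ∈ fil s := by
  obtain ⟨-, ε, hε, hA⟩ := hA
  exact ⟨hB, ε, hε, fun δ hδ hεδ => (s.isUltrafilterOn hδ).mem_of_superset (hA δ hδ hεδ)
    (inter_subset_inter_left _ hAB) inter_subset_right⟩

/-- `q = p↾⟨X, C⟩`. -/
def IsRestrictionOf (q p : QZero lam) (X C : Set Ordinal) : Prop :=
  q.C = C ∧ ∀ α ∈ C, ∀ x ∈ X ∩ Ico α (nextIn C α),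
    q.d α = {A : Set Ordinal | A ⊆ Ico α (nextIn C α) ∧ A ∩ p.Z x ∈ p.d x}

variable {p q : QZero lam} {X C : Set Ordinal}

lemma IsRestrictionOf.inter_Z_mem (hq : q.IsRestrictionOf p X C) (hC : IsClubIn C lam)
    (hCp : C ⊆ p.C) {α x : Ordinal} (hα : α ∈ C) (hx : x ∈ X ∩ Ico α (nextIn C α))
    {A : Set Ordinal} (hA : A ∩ q.Z α ∈ q.d α) : A ∩ p.Z x ∈ p.d x := by
  rw [hq.2 α hα x hx] at hA
  have hZ : p.Z x ⊆ q.Z α := by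
    change _ ⊆ Ico α (nextIn q.C α)
    rw [hq.1]
    exact p.Z_subset_Ico_nextIn hC hCp hα hx.2
  simpa only [inter_assoc, inter_eq_right.2 hZ] using hA.2

lemma IsRestrictionOf.union_diff_mem_fil (hq : q.IsRestrictionOf p X C) (hX : X ⊆ p.C)
    (hC : IsClubIn C lam) (hCp : C ⊆ p.C) {A : Set Ordinal} (hA : A ∈ fil q) :
    A ∪ (Iio lam \ ⋃ x ∈ X, p.Z x) ∈ fil p := by
  obtain ⟨hAlam, ε, hε, hA⟩ := hA
  have hε₀ := hC.nextIn_mem hε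
  refine ⟨union_subset hAlam sdiff_subset, nextIn C ε, hC.nextIn_lt hε, fun δ hδ hεδ => ?_⟩
  by_cases hδX : δ ∈ X
  · obtain ⟨α, hα, hεα, hαδ, hδα⟩ :=
      hC.exists_le_lt_nextIn hε₀.1 hεδ (p.club.1 hδ)
    have hαε : ε ≤ α := (hC.lt_nextIn hε).le.trans hεα
    have hAδ := hq.inter_Z_mem hC hCp hα ⟨hδX, hαδ, hδα⟩ (hA α (hq.1 ▸ hα) hαε)
    exact (p.isUltrafilterOn hδ).mem_of_superset hAδ
      (inter_subset_inter_left _ subset_union_left) inter_subset_right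
  · have hZU : Disjoint (p.Z δ) (⋃ x ∈ X, p.Z x) :=
      disjoint_iUnion₂_right.2 fun x hx =>
        disjoint_Ico_nextIn hδ (hX hx) fun hδx => hδX (hδx ▸ hx)
    have hZB : p.Z δ ⊆ A ∪ (Iio lam \ ⋃ x ∈ X, p.Z x) :=
      fun y hy => Or.inr ⟨p.Z_subset_Iio hδ hy, hZU.notMem_of_mem_left hy⟩
    rw [inter_eq_right.2 hZB]
    exact (p.isUltrafilterOn hδ).self_mem

lemma IsRestrictionOf.le0 (hq : q.IsRestrictionOf p X C) (hX : X ⊆ p.C)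
    (hC : IsClubIn C lam) (hCp : C ⊆ p.C) {s : QZero lam} (hps : le0 p s)
    (hUs : (⋃ x ∈ X, p.Z x) ∈ fil s) : le0 q s := by
  intro A hA
  refine s.mem_fil_of_superset (s.inter_mem_fil (hps (hq.union_diff_mem_fil hX hC hCp hA)) hUs)
    ?_ hA.1
  rintro y ⟨hyA | hyU, hy⟩
  exacts [hyA, absurd hy hyU.2]

end QZero

theorem statement13_general (κ : Cardinal.{0})
    (G : Set (QZero κ.ord))
    (hdir : ∀ p ∈ G, ∀ q ∈ G, ∃ r ∈ G, le0 p r ∧ le0 q r)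
    (hdc : ∀ p q : QZero κ.ord, q ∈ G → le0 p q → p ∈ G)
    (p : QZero κ.ord) (hp : p ∈ G) (X C : Set Ordinal)
    (h : Restrictable κ p X C)
    (hZ : (⋃ x ∈ X, p.Z x) ∈ filG G) :
    ∀ q : QZero κ.ord, q.C = C →
      (∀ α ∈ C, ∀ x ∈ X ∩ Ico α (nextIn C α),
        q.d α = {A : Set Ordinal | A ⊆ Ico α (nextIn C α) ∧ A ∩ p.Z x ∈ p.d x}) →
      q ∈ G := by
  intro q hqC hqd
  obtain ⟨hX, -, hC, hCp, -⟩ := h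
  obtain ⟨r, hr, hUr⟩ : ∃ r ∈ G, (⋃ x ∈ X, p.Z x) ∈ fil r := by
    simpa only [filG, mem_iUnion, exists_prop] using hZ
  obtain ⟨s, hs, hps, hrs⟩ := hdir p hp r hr
  exact hdc q s hs (QZero.IsRestrictionOf.le0 ⟨hqC, hqd⟩ hX hC hCp hps (hrs hUr))

/-- If `G*` is `≤⁰`-directed and downward closed, `p ∈ G*` is restrictable to `⟨X,C⟩`
and `⋃_{x∈X} Z^p_x ∈ fil(G*)`, then the restriction `p↾⟨X,C⟩` belongs to `G*`. -/
theorem statement13 (κ : Cardinal.{0}) (hreg : κ.IsRegular) (hunc : Cardinal.aleph0 < κ)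
    (G : Set (QZero κ.ord))
    (hdir : ∀ p ∈ G, ∀ q ∈ G, ∃ r ∈ G, le0 p r ∧ le0 q r)
    (hdc : ∀ p q : QZero κ.ord, q ∈ G → le0 p q → p ∈ G)
    (p : QZero κ.ord) (hp : p ∈ G) (X C : Set Ordinal)
    (h : Restrictable κ p X C)
    (hZ : (⋃ x ∈ X, p.Z x) ∈ filG G) :
    ∀ q : QZero κ.ord, q.C = C →
      (∀ α ∈ C, ∀ x ∈ X ∩ Ico α (nextIn C α),
        q.d α = {A : Set Ordinal | A ⊆ Ico α (nextIn C α) ∧ A ∩ p.Z x ∈ p.d x}) →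
      q ∈ G :=
  statement13_general κ G hdir hdc p hp X C h hZ
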